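/- Let μ be a Gaussian measure on an orthogonal direct sum H = H1 ⊕ H2 of separable real Hilbert spaces, and fix an ordered orthonormal basis of H2. For each n let Dⁿ : H1 → H1 be the bounded operator determined by ⟨Dⁿ h, h'⟩ = E_μ[⟨X1 − E_μ[X1 | F2ⁿ], h⟩ ⟨X1 − E_μ[X1 | F2ⁿ], h'⟩], and let D : H1 → H1 be determined by the same formula with F2 in place of F2ⁿ. Then Dⁿ converges to D in the weak operator topology: ⟨Dⁿ h, h'⟩ → ⟨D h, h'⟩ for all h, h' ∈ H1. -/

import Mathlib

open MeasureTheory ProbabilityTheory Filter Topology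
open scoped RealInnerProductSpace

noncomputable section

/-- Gaussian measure on a real inner product space. -/
def IsGaussianMeasure {E : Type*} [NormedAddCommGroup E] [InnerProductSpace ℝ E]
    [MeasurableSpace E] (μ : Measure E) : Prop :=
  IsProbabilityMeasure μ ∧ ∀ h : E, ∃ (m : ℝ) (v : NNReal),
    μ.map (fun x => ⟪h, x⟫) = gaussianReal m v

variable {H : Type*} [NormedAddCommGroup H] [InnerProductSpace ℝ H] [CompleteSpace H]

/-- The orthogonal projection onto a closed subspace, viewed as a map `H → H`. -/
def projL (S : Submodule ℝ H) [CompleteSpace S] : H →L[ℝ] H :=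
  S.subtypeL.comp (S.orthogonalProjectionOnto)

/-- For an orthonormal family `e`, the orthogonal projection onto the span of
`e 0, …, e (n-1)`, viewed as a map `H → H`. -/
def projFin (e : ℕ → H) (n : ℕ) : H →L[ℝ] H :=
  ∑ i ∈ Finset.range n, (innerSL ℝ (e i)).smulRight (e i)

/-- The orthogonal projection `Pⁿ = P_{H1} + P_{H2ⁿ}` onto `H1 ⊕ H2ⁿ`. -/
def Pn (H1 : Submodule ℝ H) [CompleteSpace H1] (e : ℕ → H) (n : ℕ) : H →L[ℝ] H :=
  projL H1 + projFin e n

/-- The sub-σ-algebra of the Borel σ-algebra of `H` generated by the orthogonal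
projection onto `H2 = H1ᗮ`. -/
def F2 [MeasurableSpace H] (H1 : Submodule ℝ H) [CompleteSpace H1] : MeasurableSpace H :=
  MeasurableSpace.comap (fun x => projL H1ᗮ x) inferInstance

/-- The sub-σ-algebra of the Borel σ-algebra of `H` generated by `P_{H2ⁿ} ∘ P2`. -/
def F2n [MeasurableSpace H] (H1 : Submodule ℝ H) [CompleteSpace H1]
    (e : ℕ → H) (n : ℕ) : MeasurableSpace H :=
  MeasurableSpace.comap (fun x => projFin e n (projL H1ᗮ x)) inferInstance

/-!
Test `X1` against `h, h' ∈ H1`. For any sub-σ-algebra `m`, the conditional covariance is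
`⟪A - Πₘ A, B - Πₘ B⟫` in `L²(μ)`, where `A = ⟪X, h⟫`, `B = ⟪X, h'⟫` are square integrable because
`μ` is Gaussian, and `Πₘ` is the conditional expectation on `L²`, an orthogonal projection. Since
`e` spans `H2`, the σ-algebras `F2ⁿ` increase to `F2`. The projections onto the increasing
subspaces `L²(F2ⁿ)` converge strongly, and by Lévy's upward theorem the limit is `Π_{F2}`; the
inner product is continuous. If `X1` is not Bochner integrable, every conditional expectation of
it is `0` by convention and the sequence is constant.
-/

section Projections

variable {E : Type*} [NormedAddCommGroup E] [InnerProductSpace ℝ E]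

theorem inner_projL_of_mem (K : Submodule ℝ E) [CompleteSpace K] (x : E) {g : E} (hg : g ∈ K) :
    ⟪projL K x, g⟫ = ⟪x, g⟫ := by
  have h := K.starProjection_inner_eq_zero x g hg
  rw [inner_sub_left, sub_eq_zero] at h
  exact h.symm

theorem projFin_apply (e : ℕ → E) (n : ℕ) (x : E) :
    projFin e n x = ∑ i ∈ Finset.range n, ⟪e i, x⟫ • e i := by
  simp [projFin]

variable {e : ℕ → E}

theorem inner_projFin_of_lt (he : Orthonormal ℝ e) {n i : ℕ} (hi : i < n) (x : E) :
    ⟪e i, projFin e n x⟫ = ⟪e i, x⟫ := by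
  rw [projFin_apply, he.inner_right_sum _ (Finset.mem_range.mpr hi)]

theorem projFin_projFin_of_le (he : Orthonormal ℝ e) {n m : ℕ} (hnm : n ≤ m) (x : E) :
    projFin e n (projFin e m x) = projFin e n x := by
  simp only [projFin_apply e n]
  refine Finset.sum_congr rfl fun i hi => ?_
  rw [inner_projFin_of_lt he ((Finset.mem_range.mp hi).trans_le hnm)]

theorem starProjection_span_image_Iio (he : Orthonormal ℝ e) (n : ℕ) (x : E)
    [(Submodule.span ℝ (e '' Set.Iio n)).HasOrthogonalProjection] :
    (Submodule.span ℝ (e '' Set.Iio n)).starProjection x = projFin e n x := by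
  refine Submodule.eq_starProjection_of_mem_of_inner_eq_zero ?_ fun w hw => ?_
  · rw [projFin_apply]
    exact Submodule.sum_mem _ fun i hi => Submodule.smul_mem _ _
      (Submodule.subset_span ⟨i, Finset.mem_range.mp hi, rfl⟩)
  · induction hw using Submodule.span_induction with
    | mem z hz =>
      obtain ⟨i, hi, rfl⟩ := hz
      rw [real_inner_comm, inner_sub_right, inner_projFin_of_lt he hi, sub_self]
    | zero => exact inner_zero_right _
    | add z z' _ _ hz hz' => rw [inner_add_right, hz, hz', add_zero]
    | smul c z _ hz => rw [real_inner_smul_right, hz, mul_zero]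

theorem tendsto_projFin [CompleteSpace E] (he : Orthonormal ℝ e) {y : E}
    (hy : y ∈ (Submodule.span ℝ (Set.range e)).topologicalClosure) :
    Tendsto (fun n => projFin e n y) atTop (𝓝 y) := by
  let W : ℕ → Submodule ℝ E := fun n => Submodule.span ℝ (e '' Set.Iio n)
  have (n : ℕ) : (W n).HasOrthogonalProjection :=
    have := FiniteDimensional.span_of_finite ℝ ((Set.finite_Iio n).image e)
    inferInstance
  have hW : Monotone W := fun n m hnm =>
    Submodule.span_mono (Set.image_mono (Set.Iio_subset_Iio hnm))
  have hWsup : ⨆ n, W n = Submodule.span ℝ (Set.range e) := by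
    rw [← Submodule.span_iUnion, ← Set.image_iUnion, Set.iUnion_Iio, Set.image_univ]
  have : (⨆ n, W n).topologicalClosure.HasOrthogonalProjection := by
    rw [hWsup]; infer_instance
  have hlim := Submodule.starProjection_tendsto_closure_iSup W hW y
  rw [Submodule.starProjection_eq_self_iff.mpr (hWsup ▸ hy)] at hlim
  simpa only [W, starProjection_span_image_Iio he] using hlim

end Projections

section SigmaAlgebras

variable [MeasurableSpace H] [BorelSpace H] (H1 : Submodule ℝ H) [CompleteSpace H1]
  {e : ℕ → H}

theorem F2_le : F2 H1 ≤ ‹MeasurableSpace H› :=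
  (projL H1ᗮ).continuous.measurable.comap_le

theorem F2n_le_F2 (e : ℕ → H) (n : ℕ) : F2n H1 e n ≤ F2 H1 :=
  ((projFin e n).continuous.measurable.comp (comap_measurable _)).comap_le

theorem F2n_mono (he : Orthonormal ℝ e) : Monotone (F2n H1 e) := fun n m hnm => by
  have hcomp : (fun x => projFin e n (projL H1ᗮ x))
      = projFin e n ∘ fun x => projFin e m (projL H1ᗮ x) :=
    funext fun x => (projFin_projFin_of_le he hnm _).symm
  exact Measurable.comap_le
    (hcomp ▸ (projFin e n).continuous.measurable.comp (comap_measurable _))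

def filtrationF2n (he : Orthonormal ℝ e) : Filtration ℕ ‹MeasurableSpace H› where
  seq := F2n H1 e
  mono' := F2n_mono H1 he
  le' n := (F2n_le_F2 H1 e n).trans (F2_le H1)

theorem iSup_F2n (he : Orthonormal ℝ e)
    (hspan : (Submodule.span ℝ (Set.range e)).topologicalClosure = H1ᗮ) :
    ⨆ n, F2n H1 e n = F2 H1 := by
  refine le_antisymm (iSup_le (F2n_le_F2 H1 e)) (Measurable.comap_le ?_)
  refine @measurable_of_tendsto_metrizable H H (⨆ n, F2n H1 e n) _ _ _ _ _ _
    (fun n => (comap_measurable _).mono (le_iSup (F2n H1 e) n) le_rfl)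
    (tendsto_pi_nhds.mpr fun x => ?_)
  exact tendsto_projFin he (hspan.ge (H1ᗮ.orthogonalProjectionOnto x).2)

end SigmaAlgebras

section ConditionalExpectation

variable {α : Type*} {m m0 : MeasurableSpace α} {μ : Measure α} [IsFiniteMeasure μ]

/-- Lévy's upward theorem in `L²`. -/
theorem tendsto_condExpL2_iSup (ℱ : Filtration ℕ m0) (f : Lp ℝ 2 μ) :
    Tendsto (fun n => (condExpL2 ℝ ℝ (ℱ.le n) f : Lp ℝ 2 μ)) atTop
      (𝓝 (condExpL2 ℝ ℝ (iSup_le ℱ.le) f : Lp ℝ 2 μ)) := by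
  let U : ℕ → Submodule ℝ (Lp ℝ 2 μ) := fun n => lpMeas ℝ ℝ (ℱ n) 2 μ
  have (n : ℕ) : (U n).HasOrthogonalProjection :=
    have : Fact (ℱ n ≤ m0) := ⟨ℱ.le n⟩
    inferInstance
  have : (⨆ n, U n).topologicalClosure.HasOrthogonalProjection :=
    have := (Submodule.isClosed_topologicalClosure (⨆ n, U n)).completeSpace_coe
    inferInstance
  have hU : Monotone U := fun n k hnk g hg => mem_lpMeas_iff_aestronglyMeasurable.mpr
    ((mem_lpMeas_iff_aestronglyMeasurable.mp hg).mono (ℱ.mono hnk))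
  have hlim : Tendsto (fun n => (condExpL2 ℝ ℝ (ℱ.le n) f : Lp ℝ 2 μ)) atTop
      (𝓝 ((⨆ n, U n).topologicalClosure.starProjection f)) :=
    Submodule.starProjection_tendsto_closure_iSup U hU f
  convert hlim using 2
  have hae (k : MeasurableSpace α) (hk : k ≤ m0) :
      (condExpL2 ℝ ℝ hk f : α → ℝ) =ᵐ[μ] μ[f|k] := by
    simpa using (Lp.memLp f).condExpL2_ae_eq_condExp hk
  -- Both limits are also limits in measure: the `L²` one, and Lévy's a.e. limit.
  have hlevy : TendstoInMeasure μ (fun n => (condExpL2 ℝ ℝ (ℱ.le n) f : α → ℝ)) atTop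
      μ[f|⨆ n, ℱ n] :=
    (tendstoInMeasure_of_tendsto_ae (fun n =>
      (stronglyMeasurable_condExp.mono (ℱ.le n)).aestronglyMeasurable)
      (tendsto_ae_condExp f)).congr (fun n => (hae _ (ℱ.le n)).symm) EventuallyEq.rfl
  exact Lp.ext ((hae _ _).trans
    (tendstoInMeasure_ae_unique hlevy (tendstoInMeasure_of_tendsto_Lp hlim)))

theorem integral_mul_sub_condExp_eq_inner (hm : m ≤ m0) {a b : α → ℝ} (ha : MemLp a 2 μ)
    (hb : MemLp b 2 μ) :
    ∫ x, (a x - μ[a|m] x) * (b x - μ[b|m] x) ∂μ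
      = ⟪ha.toLp a - (condExpL2 ℝ ℝ hm (ha.toLp a) : Lp ℝ 2 μ),
          hb.toLp b - (condExpL2 ℝ ℝ hm (hb.toLp b) : Lp ℝ 2 μ)⟫ := by
  rw [L2.inner_def]
  refine integral_congr_ae ?_
  filter_upwards [Lp.coeFn_sub (ha.toLp a) (condExpL2 ℝ ℝ hm (ha.toLp a) : Lp ℝ 2 μ),
    Lp.coeFn_sub (hb.toLp b) (condExpL2 ℝ ℝ hm (hb.toLp b) : Lp ℝ 2 μ), ha.coeFn_toLp,
    hb.coeFn_toLp, ha.condExpL2_ae_eq_condExp (𝕜 := ℝ) hm, hb.condExpL2_ae_eq_condExp (𝕜 := ℝ) hm]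
    with x hsa hsb hta htb hca hcb
  simp only [hsa, hsb, Pi.sub_apply, hta, htb, hca, hcb, RCLike.inner_apply,
    conj_trivial, mul_comm]

theorem tendsto_integral_mul_sub_condExp (ℱ : Filtration ℕ m0) {a b : α → ℝ}
    (ha : MemLp a 2 μ) (hb : MemLp b 2 μ) :
    Tendsto (fun n => ∫ x, (a x - μ[a|ℱ n] x) * (b x - μ[b|ℱ n] x) ∂μ) atTop
      (𝓝 (∫ x, (a x - μ[a|⨆ n, ℱ n] x) * (b x - μ[b|⨆ n, ℱ n] x) ∂μ)) := by
  rw [integral_mul_sub_condExp_eq_inner (iSup_le ℱ.le) ha hb]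
  refine Tendsto.congr (fun n => (integral_mul_sub_condExp_eq_inner (ℱ.le n) ha hb).symm) ?_
  exact (tendsto_const_nhds.sub (tendsto_condExpL2_iSup ℱ _)).inner
    (tendsto_const_nhds.sub (tendsto_condExpL2_iSup ℱ _))

end ConditionalExpectation

theorem IsGaussianMeasure.memLp_two_inner {E : Type*} [NormedAddCommGroup E]
    [InnerProductSpace ℝ E] [MeasurableSpace E] [OpensMeasurableSpace E] {μ : Measure E}
    (hμ : IsGaussianMeasure μ) (g : E) : MemLp (fun x => ⟪x, g⟫) 2 μ := by
  obtain ⟨m, v, hmv⟩ := hμ.2 g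
  have hmeas : AEMeasurable (fun x => ⟪g, x⟫) μ :=
    (innerSL ℝ g).continuous.measurable.aemeasurable
  have := (memLp_map_measure_iff aestronglyMeasurable_id hmeas).mp
    (hmv ▸ memLp_id_gaussianReal' (μ := m) (v := v) 2 ENNReal.ofNat_ne_top)
  rw [Function.id_comp] at this
  simpa only [real_inner_comm] using this

theorem inner_sub_condExp_projL_ae_eq {m m₀ : MeasurableSpace H} {μ : Measure H}
    (K : Submodule ℝ H) [CompleteSpace K] (hint : Integrable (fun y => projL K y) μ) {g : H}
    (hg : g ∈ K) :
    (fun x => ⟪projL K x - μ[(fun y => projL K y)|m] x, g⟫)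
      =ᵐ[μ] fun x => ⟪x, g⟫ - μ[fun y => ⟪y, g⟫|m] x := by
  have hcomm := (innerSL ℝ g).comp_condExp_comm (m := m) hint
  have hcomp : innerSL ℝ g ∘ (fun y => projL K y) = fun y => ⟪y, g⟫ :=
    funext fun y => by
      rw [Function.comp_apply, innerSL_apply_apply, real_inner_comm, inner_projL_of_mem K y hg]
  rw [hcomp] at hcomm
  filter_upwards [hcomm] with x hx
  rw [inner_sub_left, inner_projL_of_mem K x hg, ← hx]
  exact congrArg _ (real_inner_comm _ _)

theorem integral_inner_sub_condExp_projL_mul_eq {m m₀ : MeasurableSpace H} {μ : Measure H}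
    (K : Submodule ℝ H) [CompleteSpace K]
    (hint : Integrable (fun y => projL K y) μ) {g g' : H} (hg : g ∈ K) (hg' : g' ∈ K) :
    ∫ x, ⟪projL K x - μ[(fun y => projL K y)|m] x, g⟫
        * ⟪projL K x - μ[(fun y => projL K y)|m] x, g'⟫ ∂μ
      = ∫ x, (⟪x, g⟫ - μ[fun y => ⟪y, g⟫|m] x) * (⟪x, g'⟫ - μ[fun y => ⟪y, g'⟫|m] x) ∂μ :=
  integral_congr_ae ((inner_sub_condExp_projL_ae_eq K hint hg).mul
    (inner_sub_condExp_projL_ae_eq K hint hg'))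

theorem conditional_covariance_truncated_tendsto_weakly_general
    [MeasurableSpace H] [BorelSpace H]
    (H1 : Submodule ℝ H) [CompleteSpace H1]
    (μ : Measure H) (hGauss : IsGaussianMeasure μ)
    (e : ℕ → H) (he : Orthonormal ℝ e)
    (hspan : (Submodule.span ℝ (Set.range e)).topologicalClosure = H1ᗮ)
    (Dn : ℕ → (H1 →L[ℝ] H1))
    (hDn : ∀ n (h h' : H1), ⟪Dn n h, h'⟫ =
      ∫ x, ⟪projL H1 x - (μ[(fun y => projL H1 y)|F2n H1 e n]) x, (h : H)⟫
        * ⟪projL H1 x - (μ[(fun y => projL H1 y)|F2n H1 e n]) x, (h' : H)⟫ ∂μ)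
    (D : H1 →L[ℝ] H1)
    (hD : ∀ h h' : H1, ⟪D h, h'⟫ =
      ∫ x, ⟪projL H1 x - (μ[(fun y => projL H1 y)|F2 H1]) x, (h : H)⟫
        * ⟪projL H1 x - (μ[(fun y => projL H1 y)|F2 H1]) x, (h' : H)⟫ ∂μ) :
    ∀ h h' : H1, Tendsto (fun n => ⟪Dn n h, h'⟫) atTop (𝓝 ⟪D h, h'⟫) := by
  intro h h'
  have : IsProbabilityMeasure μ := hGauss.1
  by_cases hint : Integrable (fun y => projL H1 y) μ
  · simp only [hDn, hD, integral_inner_sub_condExp_projL_mul_eq H1 hint h.2 h'.2,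
      ← iSup_F2n H1 he hspan]
    exact tendsto_integral_mul_sub_condExp (filtrationF2n H1 he) (hGauss.memLp_two_inner h)
      (hGauss.memLp_two_inner h')
  · simp only [hDn, hD, condExp_of_not_integrable hint]
    exact tendsto_const_nhds

/-- The conditional covariance operators `Dⁿ` associated with the
σ-algebras `F2ⁿ` converge to the conditional covariance operator `D` associated with `F2`
in the weak operator topology. -/
theorem conditional_covariance_truncated_tendsto_weakly
    [SecondCountableTopology H] [MeasurableSpace H] [BorelSpace H]
    (H1 : Submodule ℝ H) [CompleteSpace H1]
    (μ : Measure H) (hGauss : IsGaussianMeasure μ)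
    (e : ℕ → H) (he : Orthonormal ℝ e) (hemem : ∀ k, e k ∈ H1ᗮ)
    (hspan : (Submodule.span ℝ (Set.range e)).topologicalClosure = H1ᗮ)
    (Dn : ℕ → (H1 →L[ℝ] H1))
    (hDn : ∀ n (h h' : H1), ⟪Dn n h, h'⟫ =
      ∫ x, ⟪projL H1 x - (μ[(fun y => projL H1 y)|F2n H1 e n]) x, (h : H)⟫
        * ⟪projL H1 x - (μ[(fun y => projL H1 y)|F2n H1 e n]) x, (h' : H)⟫ ∂μ)
    (D : H1 →L[ℝ] H1)
    (hD : ∀ h h' : H1, ⟪D h, h'⟫ =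
      ∫ x, ⟪projL H1 x - (μ[(fun y => projL H1 y)|F2 H1]) x, (h : H)⟫
        * ⟪projL H1 x - (μ[(fun y => projL H1 y)|F2 H1]) x, (h' : H)⟫ ∂μ) :
    ∀ h h' : H1, Tendsto (fun n => ⟪Dn n h, h'⟫) atTop (𝓝 ⟪D h, h'⟫) :=
  conditional_covariance_truncated_tendsto_weakly_general H1 μ hGauss e he hspan Dn hDn D hD

end
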